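/- arXiv:2601.06620 — 4 statements merged into one kernel-verified Lean document; each statement's English description precedes it below -/
import Mathlib

section
/- Let d(r) = r on I = (0,1), ϑ > 0, and f ∈ C¹([0,1]). Then ‖r^ϑ f‖²_{L^∞(I)} ≤ C ( ‖r^ϑ f‖²_{L²(I)} + ‖r^ϑ f‖_{L²(I)} ‖r^ϑ f_r‖_{L²(I)} ), where C depends only on ϑ. -/
open MeasureTheory Set

lemma aux_sq (ϑ s y : ℝ) (hs : 0 < s) : (s ^ ϑ * |y|) ^ (2:ℝ) = s ^ (2*ϑ) * y^2 := by
  rw [show ((2:ℝ)) = ((2:ℕ):ℝ) by norm_num, Real.rpow_natCast, mul_pow, sq_abs]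
  congr 1
  rw [← Real.rpow_natCast (s ^ ϑ) 2, ← Real.rpow_mul hs.le]
  norm_num [mul_comm]

theorem stmt_2 (ϑ : ℝ) (hϑ : 0 < ϑ) :
    ∃ C > 0, ∀ f f' : ℝ → ℝ,
      (∀ r ∈ Icc (0:ℝ) 1, HasDerivWithinAt f (f' r) (Icc (0:ℝ) 1) r) →
      ContinuousOn f' (Icc (0:ℝ) 1) →
      ∀ r ∈ Ioo (0:ℝ) 1,
        (r ^ ϑ * |f r|) ^ 2 ≤
          C * ((∫ s in Ioo (0:ℝ) 1, s ^ (2*ϑ) * (f s)^2)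
            + Real.sqrt (∫ s in Ioo (0:ℝ) 1, s ^ (2*ϑ) * (f s)^2)
              * Real.sqrt (∫ s in Ioo (0:ℝ) 1, s ^ (2*ϑ) * (f' s)^2)) := by
  refine ⟨4*ϑ+6, by linarith, ?_⟩
  intro f f' hder hf'c r hr
  set A := ∫ s in Ioo (0:ℝ) 1, s ^ (2*ϑ) * (f s)^2 with hA_def
  set B := ∫ s in Ioo (0:ℝ) 1, s ^ (2*ϑ) * (f' s)^2 with hB_def
  set S := Real.sqrt A * Real.sqrt B with hS_def
  -- basic continuity facts
  have hfc : ContinuousOn f (Icc (0:ℝ) 1) := fun x hx => (hder x hx).continuousWithinAt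
  have hrpc : ∀ p : ℝ, 0 < p → Continuous (fun s : ℝ => s ^ p) := by
    intro p hp
    rw [continuous_iff_continuousAt]
    intro x
    exact Real.continuousAt_rpow_const x p (Or.inr hp.le)
  have hwc : ContinuousOn (fun s : ℝ => s ^ (2*ϑ)) (Icc (0:ℝ) 1) :=
    (hrpc _ (by linarith)).continuousOn
  have hw1c : ContinuousOn (fun s : ℝ => s ^ (2*ϑ+1)) (Icc (0:ℝ) 1) :=
    (hrpc _ (by linarith)).continuousOn
  -- nonnegativity
  have hA0 : 0 ≤ A := setIntegral_nonneg measurableSet_Ioo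
    (fun x hx => mul_nonneg (Real.rpow_nonneg hx.1.le _) (sq_nonneg _))
  have hS0 : 0 ≤ S := mul_nonneg (Real.sqrt_nonneg _) (Real.sqrt_nonneg _)
  -- Cauchy-Schwarz
  have hCS : (∫ s in Ioo (0:ℝ) 1, s ^ (2*ϑ) * (|f s| * |f' s|)) ≤ S := by
    obtain ⟨Mf, hMf⟩ := isCompact_Icc.exists_bound_of_continuousOn hfc
    obtain ⟨Mg, hMg⟩ := isCompact_Icc.exists_bound_of_continuousOn hf'c
    haveI : IsFiniteMeasure (volume.restrict (Ioo (0:ℝ) 1)) := by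
      constructor
      rw [Measure.restrict_apply_univ]
      simp [Real.volume_Ioo]
    set u : ℝ → ℝ := fun s => s ^ ϑ * |f s| with hu_def
    set v : ℝ → ℝ := fun s => s ^ ϑ * |f' s| with hv_def
    have hum : AEStronglyMeasurable u (volume.restrict (Ioo (0:ℝ) 1)) := by
      refine ContinuousOn.aestronglyMeasurable ?_ measurableSet_Ioo
      exact ((hrpc ϑ hϑ).continuousOn).mul ((hfc.mono Ioo_subset_Icc_self).abs)
    have hvm : AEStronglyMeasurable v (volume.restrict (Ioo (0:ℝ) 1)) := by
      refine ContinuousOn.aestronglyMeasurable ?_ measurableSet_Ioo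
      exact ((hrpc ϑ hϑ).continuousOn).mul ((hf'c.mono Ioo_subset_Icc_self).abs)
    have hbound : ∀ (g : ℝ → ℝ) (M : ℝ), (∀ x ∈ Icc (0:ℝ) 1, ‖g x‖ ≤ M) →
        ∀ᵐ s ∂(volume.restrict (Ioo (0:ℝ) 1)), ‖s ^ ϑ * |g s|‖ ≤ |M| := by
      intro g M hM
      refine (ae_restrict_iff' measurableSet_Ioo).2 (Filter.Eventually.of_forall fun s hs => ?_)
      have h1 : s ^ ϑ ≤ 1 := Real.rpow_le_one hs.1.le hs.2.le hϑ.le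
      have h2 : |g s| ≤ |M| := by
        have := hM s (Ioo_subset_Icc_self hs)
        rw [Real.norm_eq_abs] at this
        exact this.trans (le_abs_self M)
      rw [Real.norm_eq_abs, abs_mul, abs_of_nonneg (Real.rpow_nonneg hs.1.le ϑ), abs_abs]
      calc s ^ ϑ * |g s| ≤ 1 * |M| :=
            mul_le_mul h1 h2 (abs_nonneg _) zero_le_one
        _ = |M| := one_mul _
    have hu2 : MemLp u (ENNReal.ofReal 2) (volume.restrict (Ioo (0:ℝ) 1)) :=
      MemLp.of_bound hum |Mf| (hbound f Mf hMf)
    have hv2 : MemLp v (ENNReal.ofReal 2) (volume.restrict (Ioo (0:ℝ) 1)) :=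
      MemLp.of_bound hvm |Mg| (hbound f' Mg hMg)
    have hu0 : 0 ≤ᵐ[volume.restrict (Ioo (0:ℝ) 1)] u :=
      (ae_restrict_iff' measurableSet_Ioo).2 (Filter.Eventually.of_forall fun s hs =>
        mul_nonneg (Real.rpow_nonneg hs.1.le _) (abs_nonneg _))
    have hv0 : 0 ≤ᵐ[volume.restrict (Ioo (0:ℝ) 1)] v :=
      (ae_restrict_iff' measurableSet_Ioo).2 (Filter.Eventually.of_forall fun s hs =>
        mul_nonneg (Real.rpow_nonneg hs.1.le _) (abs_nonneg _))
    have hCS0 := integral_mul_le_Lp_mul_Lq_of_nonneg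
      (μ := volume.restrict (Ioo (0:ℝ) 1)) (p := 2) (q := 2) ⟨by norm_num, by norm_num, by norm_num⟩ hu0 hv0 hu2 hv2
    have hA2 : (∫ s in Ioo (0:ℝ) 1, u s ^ (2:ℝ)) = A := by
      refine setIntegral_congr_fun measurableSet_Ioo fun s hs => ?_
      exact aux_sq ϑ s (f s) hs.1
    have hB2 : (∫ s in Ioo (0:ℝ) 1, v s ^ (2:ℝ)) = B := by
      refine setIntegral_congr_fun measurableSet_Ioo fun s hs => ?_
      exact aux_sq ϑ s (f' s) hs.1
    rw [hA2, hB2, ← Real.sqrt_eq_rpow, ← Real.sqrt_eq_rpow] at hCS0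
    calc (∫ s in Ioo (0:ℝ) 1, s ^ (2*ϑ) * (|f s| * |f' s|))
        = ∫ s in Ioo (0:ℝ) 1, u s * v s := by
          refine setIntegral_congr_fun measurableSet_Ioo fun s hs => ?_
          have h2 : s ^ (2*ϑ) = s ^ ϑ * s ^ ϑ := by
            rw [← Real.rpow_add hs.1]; ring_nf
          simp only [hu_def, hv_def]
          rw [h2]; ring
      _ ≤ S := hCS0
  -- integrability helper
  have hIcc : ∀ {g : ℝ → ℝ}, ContinuousOn g (Icc (0:ℝ) 1) → IntegrableOn g (Ioo (0:ℝ) 1) :=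
    fun hg => (hg.integrableOn_Icc).mono_set Ioo_subset_Icc_self
  have hII : ∀ {g : ℝ → ℝ}, ContinuousOn g (Icc (0:ℝ) 1) → ∀ {a b : ℝ}, a ∈ Icc (0:ℝ) 1 →
      b ∈ Icc (0:ℝ) 1 → IntervalIntegrable g volume a b := by
    intro g hg a b ha hb
    exact (hg.mono (uIcc_subset_Icc ha hb)).intervalIntegrable
  -- the functions
  set H : ℝ → ℝ := fun x => 2 * (x ^ (2*ϑ) * (|f x| * |f' x|)) with hH_def
  set G : ℝ → ℝ := fun x => (2*ϑ+1) * (x ^ (2*ϑ) * (f x)^2) + H x with hG_def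
  set φ : ℝ → ℝ := fun x => x ^ (2*ϑ) * (f x)^2 with hφ_def
  set ψ : ℝ → ℝ := fun x => x ^ (2*ϑ+1) * (f x)^2 with hψ_def
  set φd : ℝ → ℝ := fun x => (2*ϑ) * x ^ (2*ϑ-1) * (f x)^2 + x ^ (2*ϑ) * (2 * f x * f' x)
    with hφd_def
  set ψd : ℝ → ℝ := fun x => (2*ϑ+1) * x ^ (2*ϑ) * (f x)^2 + x ^ (2*ϑ+1) * (2 * f x * f' x)
    with hψd_def
  have hHc : ContinuousOn H (Icc (0:ℝ) 1) :=
    continuousOn_const.mul (hwc.mul ((hfc.abs).mul (hf'c.abs)))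
  have hφc : ContinuousOn φ (Icc (0:ℝ) 1) := hwc.mul (hfc.pow 2)
  have hψcont : ContinuousOn ψ (Icc (0:ℝ) 1) := hw1c.mul (hfc.pow 2)
  have hGc : ContinuousOn G (Icc (0:ℝ) 1) := (continuousOn_const.mul hφc).add hHc
  have hψdc : ContinuousOn ψd (Icc (0:ℝ) 1) :=
    ((continuousOn_const.mul hwc).mul (hfc.pow 2)).add
      (hw1c.mul ((continuousOn_const.mul hfc).mul hf'c))
  have hH0 : ∀ x ∈ Icc (0:ℝ) 1, 0 ≤ H x := fun x hx =>
    mul_nonneg (by norm_num) (mul_nonneg (Real.rpow_nonneg hx.1 _)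
      (mul_nonneg (abs_nonneg _) (abs_nonneg _)))
  have hG0 : ∀ x ∈ Icc (0:ℝ) 1, 0 ≤ G x := fun x hx =>
    add_nonneg (mul_nonneg (by linarith) (mul_nonneg (Real.rpow_nonneg hx.1 _) (sq_nonneg _)))
      (hH0 x hx)
  -- derivatives
  have hfd : ∀ x ∈ Ioo (0:ℝ) 1, HasDerivAt f (f' x) x := fun x hx =>
    (hder x (Ioo_subset_Icc_self hx)).hasDerivAt (Icc_mem_nhds hx.1 hx.2)
  have hsqd : ∀ x ∈ Ioo (0:ℝ) 1, HasDerivAt (fun s => (f s)^2) (2 * f x * f' x) x := by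
    intro x hx
    simpa using (hfd x hx).fun_pow 2
  have hψd : ∀ x ∈ Ioo (0:ℝ) 1, HasDerivAt ψ (ψd x) x := by
    intro x hx
    have h1 : HasDerivAt (fun s : ℝ => s ^ (2*ϑ+1)) ((2*ϑ+1) * x ^ (2*ϑ)) x := by
      have := Real.hasDerivAt_rpow_const (x := x) (p := 2*ϑ+1) (Or.inl hx.1.ne')
      convert this using 2
      ring
    simpa [hψd_def, hψ_def] using h1.fun_mul (hsqd x hx)
  have hφdd : ∀ x ∈ Ioo (0:ℝ) 1, HasDerivAt φ (φd x) x := by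
    intro x hx
    have h1 : HasDerivAt (fun s : ℝ => s ^ (2*ϑ)) ((2*ϑ) * x ^ (2*ϑ-1)) x :=
      Real.hasDerivAt_rpow_const (x := x) (p := 2*ϑ) (Or.inl hx.1.ne')
    simpa [hφd_def, hφ_def] using h1.fun_mul (hsqd x hx)
  -- integral of H over [0,1]
  have hHIoo : (∫ x in Ioo (0:ℝ) 1, H x) ≤ 2 * S := by
    have h1 : (∫ x in Ioo (0:ℝ) 1, H x)
        = 2 * ∫ x in Ioo (0:ℝ) 1, x ^ (2*ϑ) * (|f x| * |f' x|) := by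
      simp only [hH_def]
      rw [integral_const_mul]
    rw [h1]
    linarith
  have hH01 : (∫ x in (0:ℝ)..1, H x) ≤ 2 * S := by
    rw [intervalIntegral.integral_of_le zero_le_one, integral_Ioc_eq_integral_Ioo]
    exact hHIoo
  -- integral of G over [0,1]
  have hG01 : (∫ x in (0:ℝ)..1, G x) ≤ (2*ϑ+1) * A + 2 * S := by
    rw [intervalIntegral.integral_of_le zero_le_one, integral_Ioc_eq_integral_Ioo]
    have hsplit : (∫ x in Ioo (0:ℝ) 1, G x)
        = (2*ϑ+1) * A + ∫ x in Ioo (0:ℝ) 1, H x := by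
      simp only [hG_def]
      rw [integral_add ((hIcc hφc).const_mul _) (hIcc hHc), integral_const_mul]
    rw [hsplit]
    linarith
  -- ψ bound on [1/2,1]
  have hψle : ∀ t ∈ Icc (1/2:ℝ) 1, ψ t ≤ (2*ϑ+1) * A + 2 * S := by
    intro t ht
    have ht0 : (0:ℝ) ≤ t := by linarith [ht.1]
    have ht1 : t ∈ Icc (0:ℝ) 1 := ⟨ht0, ht.2⟩
    have hFTC : ∫ x in (0:ℝ)..t, ψd x = ψ t - ψ 0 :=
      intervalIntegral.integral_eq_sub_of_hasDerivAt_of_le ht0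
        (hψcont.mono (Icc_subset_Icc le_rfl ht.2))
        (fun x hx => hψd x ⟨hx.1, lt_of_lt_of_le hx.2 ht.2⟩)
        (hII hψdc (left_mem_Icc.2 zero_le_one) ht1)
    have hψ0 : ψ 0 = 0 := by
      simp [hψ_def, Real.zero_rpow (by positivity : (2*ϑ+1) ≠ 0)]
    have hmono : ∫ x in (0:ℝ)..t, ψd x ≤ ∫ x in (0:ℝ)..t, G x := by
      refine intervalIntegral.integral_mono_on ht0
        (hII hψdc (left_mem_Icc.2 zero_le_one) ht1)
        (hII hGc (left_mem_Icc.2 zero_le_one) ht1) ?_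
      intro x hx
      have hx1 : x ∈ Icc (0:ℝ) 1 := ⟨hx.1, hx.2.trans ht.2⟩
      have e1 : x ^ (2*ϑ+1) ≤ x ^ (2*ϑ) := by
        rcases eq_or_lt_of_le hx1.1 with h | h
        · rw [← h, Real.zero_rpow (by positivity : (2*ϑ+1) ≠ 0),
            Real.zero_rpow (by positivity : (2*ϑ) ≠ 0)]
        · exact Real.rpow_le_rpow_of_exponent_ge h hx1.2 (by linarith)
      have e2 : 2 * f x * f' x ≤ 2 * (|f x| * |f' x|) := by
        have := le_abs_self (f x * f' x)
        rw [abs_mul] at this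
        linarith
      have e3 : (0:ℝ) ≤ x ^ (2*ϑ+1) := Real.rpow_nonneg hx1.1 _
      have e4 : (0:ℝ) ≤ 2 * (|f x| * |f' x|) := by positivity
      simp only [hψd_def, hG_def, hH_def]
      nlinarith [mul_le_mul_of_nonneg_left e2 e3, mul_le_mul_of_nonneg_right e1 e4]
    have hext : ∫ x in (0:ℝ)..t, G x ≤ ∫ x in (0:ℝ)..1, G x := by
      refine intervalIntegral.integral_mono_interval le_rfl ht0 ht.2 ?_
        (hII hGc (left_mem_Icc.2 zero_le_one) (right_mem_Icc.2 zero_le_one))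
      refine (ae_restrict_iff' measurableSet_Ioc).2 (Filter.Eventually.of_forall ?_)
      exact fun x hx => hG0 x ⟨hx.1.le, hx.2⟩
    rw [hψ0, sub_zero] at hFTC
    linarith
  -- φ bound on [1/2,1]
  have key1 : ∀ t ∈ Icc (1/2:ℝ) 1, φ t ≤ (4*ϑ+2) * A + 4 * S := by
    intro t ht
    have ht0 : (0:ℝ) < t := by linarith [ht.1]
    have h1 := hψle t ht
    have h2 : t ^ (2*ϑ+1) = t * t ^ (2*ϑ) := by
      rw [Real.rpow_add ht0, Real.rpow_one]; ring
    have h3 : (0:ℝ) ≤ t ^ (2*ϑ) := Real.rpow_nonneg ht0.le _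
    have h4 : φ t ≤ 2 * ψ t := by
      simp only [hφ_def, hψ_def, h2]
      have h5 : (1:ℝ) * (t ^ (2*ϑ) * (f t)^2) ≤ (2*t) * (t ^ (2*ϑ) * (f t)^2) :=
        mul_le_mul_of_nonneg_right (by linarith [ht.1]) (mul_nonneg h3 (sq_nonneg _))
      nlinarith [h5]
    linarith
  -- final pointwise statement
  have hgoal : φ r ≤ (4*ϑ+6) * (A + S) := by
    rcases le_or_gt (1/2:ℝ) r with h | h
    · have := key1 r ⟨h, hr.2.le⟩
      nlinarith
    · have hr0 : (0:ℝ) < r := hr.1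
      have hrmem : r ∈ Icc (0:ℝ) 1 := ⟨hr0.le, hr.2.le⟩
      have hhalf : (1/2:ℝ) ∈ Icc (0:ℝ) 1 := by norm_num
      have hsub : Icc r (1/2:ℝ) ⊆ Icc (0:ℝ) 1 := Icc_subset_Icc hr0.le (by norm_num)
      have hφdc : ContinuousOn φd (Icc r (1/2)) := by
        have h1 : ContinuousOn (fun x : ℝ => x ^ (2*ϑ-1)) (Icc r (1/2)) := fun x hx =>
          (Real.continuousAt_rpow_const x _ (Or.inl (lt_of_lt_of_le hr0 hx.1).ne')).continuousWithinAt
        exact ((continuousOn_const.mul h1).mul ((hfc.mono hsub).pow 2)).add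
          ((hwc.mono hsub).mul ((continuousOn_const.mul (hfc.mono hsub)).mul (hf'c.mono hsub)))
      have hφdi : IntervalIntegrable φd volume r (1/2) :=
        (hφdc.mono (by rw [uIcc_of_le h.le])).intervalIntegrable
      have hFTC : ∫ x in r..(1/2:ℝ), φd x = φ (1/2) - φ r :=
        intervalIntegral.integral_eq_sub_of_hasDerivAt_of_le h.le
          (hφc.mono hsub)
          (fun x hx => hφdd x ⟨hr0.trans hx.1, by linarith [hx.2]⟩)
          hφdi
      have hmono : ∫ x in r..(1/2:ℝ), (- φd x) ≤ ∫ x in r..(1/2:ℝ), H x := by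
        refine intervalIntegral.integral_mono_on h.le hφdi.neg (hII hHc hrmem hhalf) ?_
        intro x hx
        have hx0 : (0:ℝ) < x := lt_of_lt_of_le hr0 hx.1
        have e2 : -(2 * f x * f' x) ≤ 2 * (|f x| * |f' x|) := by
          have := neg_abs_le (f x * f' x)
          rw [abs_mul] at this
          linarith
        have e3 : (0:ℝ) ≤ x ^ (2*ϑ) := Real.rpow_nonneg hx0.le _
        have e5 : (0:ℝ) ≤ (2*ϑ) * x ^ (2*ϑ-1) * (f x)^2 := by
          have h6 : (0:ℝ) ≤ x ^ (2*ϑ-1) := Real.rpow_nonneg hx0.le _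
          positivity
        simp only [hφd_def, hH_def, Pi.neg_apply]
        nlinarith [mul_le_mul_of_nonneg_left e2 e3]
      have hext : ∫ x in r..(1/2:ℝ), H x ≤ ∫ x in (0:ℝ)..1, H x := by
        refine intervalIntegral.integral_mono_interval hr0.le h.le (by norm_num) ?_
          (hII hHc (left_mem_Icc.2 zero_le_one) (right_mem_Icc.2 zero_le_one))
        refine (ae_restrict_iff' measurableSet_Ioc).2 (Filter.Eventually.of_forall ?_)
        exact fun x hx => hH0 x ⟨hx.1.le, hx.2⟩
      have hneg : ∫ x in r..(1/2:ℝ), (- φd x) = - ∫ x in r..(1/2:ℝ), φd x :=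
        intervalIntegral.integral_neg
      have h12 := key1 (1/2:ℝ) (by norm_num)
      have hstep : φ r ≤ φ (1/2) + 2 * S := by
        rw [hFTC] at hneg
        linarith [hmono, hext, hH01, hneg]
      nlinarith
  -- rewrite goal
  have heq : (r ^ ϑ * |f r|) ^ 2 = φ r := by
    simp only [hφ_def]
    have := aux_sq ϑ r (f r) hr.1
    rw [show ((2:ℝ)) = ((2:ℕ):ℝ) by norm_num, Real.rpow_natCast] at this
    exact this
  rw [heq]
  exact hgoal
end

section
/- Let n ≥ 2, m = n − 1, and let f ∈ C⁴((0,R)) define the radial vector field F(y) = f(|y|) y/|y| on ℝⁿ \ {0}. Then pointwise, with r = |y|: |∇F|² = |f_r|² + m |f/r|², and |∇²F|² = |f_{rr}|² + 3m |(f/r)_r|². -/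
open Real

lemma sumfirst (n : ℕ) (v : Fin n → ℝ) (p G : ℝ) :
    ∑ i : Fin n, ∑ j : Fin n, (p * v i * v j + G * (if i = j then 1 else 0))^2
    = p^2*(∑ i, v i^2)^2 + 2*p*G*(∑ i, v i^2) + n*G^2 := by
  have h : ∀ i j : Fin n, (p * v i * v j + G * (if i = j then 1 else 0))^2
      = p^2 * v i^2 * v j^2 + (if i = j then 2*p*G*(v i*v i) + G^2 else 0) := by
    intro i j; by_cases h : i = j <;> simp [h] <;> ring
  simp only [h, Finset.sum_add_distrib, Finset.sum_ite_eq, Finset.mem_univ, if_true]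
  have e1 : ∑ x : Fin n, ∑ x1 : Fin n, p ^ 2 * v x ^ 2 * v x1 ^ 2 = p^2 * (∑ i, v i^2)^2 := by
    simp only [← Finset.mul_sum]; rw [← Finset.sum_mul, ← Finset.mul_sum]; ring
  have e2 : ∑ x : Fin n, 2*p*G*(v x * v x) = 2*p*G*∑ i, v i^2 := by
    rw [Finset.mul_sum]; exact Finset.sum_congr rfl fun x _ => by ring
  have e3 : ∑ _x : Fin n, (G^2 : ℝ) = n * G^2 := by
    simp [Finset.sum_const, Finset.card_univ]
  rw [e1, e2, e3]; ring

lemma sum_k (n : ℕ) (w : Fin n → ℝ) (i j : Fin n) (P Q S : ℝ) :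
    ∑ k : Fin n, (P * w k + Q * (if k = j then 1 else 0) + S * (if i = k then 1 else 0))^2
    = P^2 * (∑ k, w k^2) + 2*P*Q*w j + Q^2 + 2*P*S*w i + S^2
      + (if i = j then 2*Q*S else 0) := by
  have h : ∀ k : Fin n,
      (P * w k + Q * (if k = j then 1 else 0) + S * (if i = k then 1 else 0))^2
      = P^2 * w k^2 + (if k = j then 2*P*Q*w k + Q^2 else 0)
        + (if i = k then 2*P*S*w k + S^2 else 0)
        + (if k = j then (if i = k then 2*Q*S else 0) else 0) := by
    intro k; by_cases h1 : k = j
    · subst h1; by_cases h2 : i = k <;> simp [h2] <;> ring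
    · by_cases h2 : i = k <;> simp [h1, h2] <;> ring
  simp only [h, Finset.sum_add_distrib, Finset.sum_ite_eq, Finset.sum_ite_eq',
    Finset.mem_univ, if_true, ← Finset.mul_sum]
  ring

lemma sumsecond (n : ℕ) (v : Fin n → ℝ) (a b c : ℝ) :
    ∑ i : Fin n, ∑ j : Fin n, ∑ k : Fin n,
      (a * (v i * v j * v k) + b * ((if i = j then 1 else 0) * v k)
        + b * ((if k = j then 1 else 0) * v i) + c * ((if i = k then 1 else 0) * v j))^2
    = a^2*(∑ i, v i^2)^3 + 4*a*b*(∑ i, v i^2)^2 + 2*a*c*(∑ i, v i^2)^2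
      + (2*n+2)*b^2*(∑ i, v i^2) + n*c^2*(∑ i, v i^2) + 4*b*c*(∑ i, v i^2) := by
  set R := ∑ i, v i^2 with hR
  have step1 : ∀ i j : Fin n, ∑ k : Fin n,
      (a * (v i * v j * v k) + b * ((if i = j then 1 else 0) * v k)
        + b * ((if k = j then 1 else 0) * v i) + c * ((if i = k then 1 else 0) * v j))^2
      = (a*v i*v j + b*(if i = j then 1 else 0))^2 * R
        + 2*(a*v i*v j + b*(if i = j then 1 else 0))*(b*v i)*v j + (b*v i)^2
        + 2*(a*v i*v j + b*(if i = j then 1 else 0))*(c*v j)*v i + (c*v j)^2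
        + (if i = j then 2*(b*v i)*(c*v j) else 0) := by
    intro i j
    rw [← sum_k n v i j (a*v i*v j + b*(if i = j then 1 else 0)) (b*v i) (c*v j)]
    exact Finset.sum_congr rfl fun k _ => by ring
  simp only [step1]
  have step2 : ∀ i : Fin n, ∑ j : Fin n,
      ((a*v i*v j + b*(if i = j then 1 else 0))^2 * R
        + 2*(a*v i*v j + b*(if i = j then 1 else 0))*(b*v i)*v j + (b*v i)^2
        + 2*(a*v i*v j + b*(if i = j then 1 else 0))*(c*v j)*v i + (c*v j)^2
        + (if i = j then 2*(b*v i)*(c*v j) else 0))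
      = a^2*v i^2*R^2 + 4*a*b*v i^2*R + n*b^2*v i^2 + 2*a*c*v i^2*R + c^2*R
        + b^2*R + 2*b^2*v i^2 + 4*b*c*v i^2 := by
    intro i
    have h : ∀ j : Fin n,
        ((a*v i*v j + b*(if i = j then 1 else 0))^2 * R
        + 2*(a*v i*v j + b*(if i = j then 1 else 0))*(b*v i)*v j + (b*v i)^2
        + 2*(a*v i*v j + b*(if i = j then 1 else 0))*(c*v j)*v i + (c*v j)^2
        + (if i = j then 2*(b*v i)*(c*v j) else 0))
        = a^2*v i^2*R*v j^2 + 2*a*b*v i^2*v j^2 + b^2*v i^2 + 2*a*c*v i^2*v j^2 + c^2*v j^2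
          + (if i = j then 2*a*b*v i^2*R + b^2*R + 2*b^2*v i^2 + 4*b*c*v i^2 else 0) := by
      intro j; by_cases hij : i = j
      · subst hij; simp only [if_true]; ring
      · simp only [hij, if_false]; ring
    simp only [h, Finset.sum_add_distrib, Finset.sum_ite_eq, Finset.mem_univ, if_true,
      ← Finset.mul_sum, Finset.sum_const, Finset.card_univ, Fintype.card_fin, nsmul_eq_mul]
    ring
  simp only [step2, Finset.sum_add_distrib, ← Finset.mul_sum, Finset.sum_const,
    Finset.card_univ, Fintype.card_fin, nsmul_eq_mul, ← Finset.sum_mul]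
  ring

lemma norm_hasFDerivAt {n : ℕ} (y : EuclideanSpace ℝ (Fin n)) (hy : y ≠ 0) :
    HasFDerivAt (fun z : EuclideanSpace ℝ (Fin n) => ‖z‖) (‖y‖⁻¹ • innerSL ℝ y) y := by
  have hy' : ‖y‖ ≠ 0 := norm_ne_zero_iff.2 hy
  have h1 : HasFDerivAt (fun z : EuclideanSpace ℝ (Fin n) => ‖z‖^2)
      (2 • innerSL ℝ y) y := by
    simpa using (hasFDerivAt_id y).norm_sq
  have h2 := h1.sqrt (pow_ne_zero 2 hy')
  have heq : (fun z : EuclideanSpace ℝ (Fin n) => √(‖z‖^2)) = fun z => ‖z‖ := by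
    funext z; exact Real.sqrt_sq (norm_nonneg z)
  rw [heq] at h2
  refine h2.congr_fderiv ?_
  ext v
  simp [Real.sqrt_sq (norm_nonneg y)]
  field_simp

lemma radial1_apply {n : ℕ} (g : ℝ → ℝ) (g' : ℝ) (z : EuclideanSpace ℝ (Fin n))
    (hz : z ≠ 0) (hg : HasDerivAt g g' ‖z‖) (i k : Fin n) :
    fderiv ℝ (fun v => g ‖v‖ * v i) z (EuclideanSpace.single k 1)
    = g' * (z k / ‖z‖) * z i + g ‖z‖ * (if i = k then 1 else 0) := by
  have hn := norm_hasFDerivAt z hz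
  have hgz : HasFDerivAt (fun v : EuclideanSpace ℝ (Fin n) => g ‖v‖)
      (g' • (‖z‖⁻¹ • innerSL ℝ z)) z := hg.comp_hasFDerivAt z hn
  have hproj : HasFDerivAt (fun v : EuclideanSpace ℝ (Fin n) => v i)
      (EuclideanSpace.proj (𝕜 := ℝ) i) z := (EuclideanSpace.proj (𝕜 := ℝ) i).hasFDerivAt
  have hmul := hgz.mul hproj
  rw [HasFDerivAt.fderiv (f := fun v : EuclideanSpace ℝ (Fin n) => g ‖v‖ * v i) hmul]
  simp [EuclideanSpace.inner_single_right, EuclideanSpace.single_apply]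
  ring

lemma radial2_apply {n : ℕ} (u w : ℝ → ℝ) (u' w' : ℝ) (z : EuclideanSpace ℝ (Fin n))
    (hz : z ≠ 0) (hu : HasDerivAt u u' ‖z‖) (hw : HasDerivAt w w' ‖z‖)
    (i k j : Fin n) (c : ℝ) :
    fderiv ℝ (fun v => u ‖v‖ * (v i * v k) + w ‖v‖ * c) z (EuclideanSpace.single j 1)
    = u' * (z j / ‖z‖) * (z i * z k)
      + u ‖z‖ * ((if i = j then 1 else 0) * z k + z i * (if k = j then 1 else 0))
      + w' * (z j / ‖z‖) * c := by
  have hn := norm_hasFDerivAt z hz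
  have huz : HasFDerivAt (fun v : EuclideanSpace ℝ (Fin n) => u ‖v‖)
      (u' • (‖z‖⁻¹ • innerSL ℝ z)) z := hu.comp_hasFDerivAt z hn
  have hwz : HasFDerivAt (fun v : EuclideanSpace ℝ (Fin n) => w ‖v‖)
      (w' • (‖z‖⁻¹ • innerSL ℝ z)) z := hw.comp_hasFDerivAt z hn
  have hproj : ∀ l : Fin n, HasFDerivAt (fun v : EuclideanSpace ℝ (Fin n) => v l)
      (EuclideanSpace.proj (𝕜 := ℝ) l) z := fun l => (EuclideanSpace.proj (𝕜 := ℝ) l).hasFDerivAt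
  have hik := (hproj i).mul (hproj k)
  have htot := (huz.mul hik).add (hwz.mul_const c)
  rw [HasFDerivAt.fderiv (f := fun v : EuclideanSpace ℝ (Fin n) => u ‖v‖ * (v i * v k) + w ‖v‖ * c) htot]
  simp [EuclideanSpace.inner_single_right, EuclideanSpace.single_apply]
  split_ifs <;> ring

theorem stmt_6 (n m : ℕ) (hn : 2 ≤ n) (hm : m = n - 1)
    (f : ℝ → ℝ) (hf : ContDiffOn ℝ 4 f (Set.Ioi 0))
    (F : EuclideanSpace ℝ (Fin n) → Fin n → ℝ)
    (hF : ∀ (y : EuclideanSpace ℝ (Fin n)) (i : Fin n), F y i = f ‖y‖ * y i / ‖y‖)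
    (y : EuclideanSpace ℝ (Fin n)) (hy : y ≠ 0) :
    (∑ i : Fin n, ∑ j : Fin n,
        (fderiv ℝ (fun z => F z i) y (EuclideanSpace.single j 1)) ^ 2
      = (deriv f ‖y‖) ^ 2 + (m : ℝ) * (f ‖y‖ / ‖y‖) ^ 2) ∧
    (∑ i : Fin n, ∑ j : Fin n, ∑ k : Fin n,
        (fderiv ℝ (fun z =>
            fderiv ℝ (fun w => F w i) z (EuclideanSpace.single k 1)) y
          (EuclideanSpace.single j 1)) ^ 2
      = (deriv (deriv f) ‖y‖) ^ 2
        + 3 * (m : ℝ) * (deriv (fun s => f s / s) ‖y‖) ^ 2) := by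
  classical
  have hr : (0:ℝ) < ‖y‖ := norm_pos_iff.2 hy
  have hrne : ‖y‖ ≠ 0 := hr.ne'
  have hmcast : (m:ℝ) = (n:ℝ) - 1 := by
    rw [hm, Nat.cast_sub (by omega : 1 ≤ n), Nat.cast_one]
  have hR : ∑ i : Fin n, y i ^ 2 = ‖y‖ ^ 2 := by
    rw [EuclideanSpace.norm_eq, Real.sq_sqrt (by positivity)]
    exact Finset.sum_congr rfl fun i _ => by rw [Real.norm_eq_abs, sq_abs]
  -- differentiability facts
  have hfd : ∀ s : ℝ, 0 < s → HasDerivAt f (deriv f s) s := fun s hs =>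
    ((hf.contDiffAt (isOpen_Ioi.mem_nhds hs)).differentiableAt (by norm_num)).hasDerivAt
  have hf' : ContDiffOn ℝ 3 (deriv f) (Set.Ioi 0) :=
    hf.deriv_of_isOpen isOpen_Ioi (by norm_num)
  have hf2d : HasDerivAt (deriv f) (deriv (deriv f) ‖y‖) ‖y‖ :=
    ((hf'.contDiffAt (isOpen_Ioi.mem_nhds hr)).differentiableAt (by norm_num)).hasDerivAt
  have hgd : ∀ s : ℝ, 0 < s →
      HasDerivAt (fun t => f t / t) ((deriv f s * s - f s * 1)/s^2) s := fun s hs =>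
    (hfd s hs).div (hasDerivAt_id s) hs.ne'
  have hFg : ∀ i : Fin n, (fun z : EuclideanSpace ℝ (Fin n) => F z i)
      = fun z => (f ‖z‖ / ‖z‖) * z i := by
    intro i; funext z; rw [hF, mul_div_right_comm]
  -- first derivative at every nonzero point
  have hD1 : ∀ z : EuclideanSpace ℝ (Fin n), z ≠ 0 → ∀ i k : Fin n,
      fderiv ℝ (fun w => F w i) z (EuclideanSpace.single k 1)
      = ((deriv f ‖z‖ * ‖z‖ - f ‖z‖ * 1)/‖z‖^2) * (z k / ‖z‖) * z i
        + (f ‖z‖ / ‖z‖) * (if i = k then 1 else 0) := by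
    intro z hz i k
    rw [hFg i]
    exact radial1_apply (fun s => f s / s) _ z hz (hgd ‖z‖ (norm_pos_iff.2 hz)) i k
  constructor
  · -- first part
    have hsq1 : ∀ i j : Fin n,
        (fderiv ℝ (fun z => F z i) y (EuclideanSpace.single j 1))^2
        = (((deriv f ‖y‖ * ‖y‖ - f ‖y‖)/‖y‖^3) * y i * y j
            + (f ‖y‖ / ‖y‖) * (if i = j then 1 else 0))^2 := by
      intro i j; rw [hD1 y hy i j]; ring
    simp only [hsq1]
    rw [sumfirst n y ((deriv f ‖y‖ * ‖y‖ - f ‖y‖)/‖y‖^3) (f ‖y‖ / ‖y‖), hR, hmcast]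
    field_simp
    ring
  · -- second part
    have hud : HasDerivAt (fun s => (deriv f s * s - f s)/s^3)
        ((deriv (deriv f) ‖y‖ * ‖y‖^2 - 3*deriv f ‖y‖*‖y‖ + 3*f ‖y‖)/‖y‖^4) ‖y‖ := by
      have h0 : HasDerivAt (fun s => deriv f s * s - f s)
          (deriv (deriv f) ‖y‖ * ‖y‖ + deriv f ‖y‖ * 1 - deriv f ‖y‖) ‖y‖ :=
        (hf2d.mul (hasDerivAt_id ‖y‖)).sub (hfd ‖y‖ hr)
      have h1 := h0.div (hasDerivAt_pow 3 ‖y‖) (pow_ne_zero 3 hrne)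
      refine h1.congr_deriv ?_
      norm_num
      field_simp
      ring
    have hwd := hgd ‖y‖ hr
    have hev : ∀ i k : Fin n,
        (fun z => fderiv ℝ (fun w => F w i) z (EuclideanSpace.single k 1))
        =ᶠ[nhds y] fun z => ((deriv f ‖z‖ * ‖z‖ - f ‖z‖)/‖z‖^3) * (z i * z k)
            + (f ‖z‖ / ‖z‖) * (if i = k then 1 else 0) := by
      intro i k
      filter_upwards [isOpen_compl_singleton.mem_nhds
        (by simpa using hy : y ∈ ({0} : Set (EuclideanSpace ℝ (Fin n)))ᶜ)] with z hz
      rw [hD1 z (by simpa using hz) i k]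
      ring
    have hD2 : ∀ i j k : Fin n,
        fderiv ℝ (fun z => fderiv ℝ (fun w => F w i) z (EuclideanSpace.single k 1)) y
          (EuclideanSpace.single j 1)
        = ((deriv (deriv f) ‖y‖ * ‖y‖^2 - 3*deriv f ‖y‖*‖y‖ + 3*f ‖y‖)/‖y‖^4)
              * (y j / ‖y‖) * (y i * y k)
          + ((deriv f ‖y‖ * ‖y‖ - f ‖y‖)/‖y‖^3)
              * ((if i = j then 1 else 0) * y k + y i * (if k = j then 1 else 0))
          + ((deriv f ‖y‖ * ‖y‖ - f ‖y‖ * 1)/‖y‖^2) * (y j / ‖y‖)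
              * (if i = k then 1 else 0) := by
      intro i j k
      rw [Filter.EventuallyEq.fderiv_eq (hev i k)]
      exact radial2_apply (fun s => (deriv f s * s - f s)/s^3) (fun s => f s / s)
        _ _ y hy hud hwd i k j _
    have hsq2 : ∀ i j k : Fin n,
        (fderiv ℝ (fun z => fderiv ℝ (fun w => F w i) z (EuclideanSpace.single k 1)) y
          (EuclideanSpace.single j 1))^2
        = (((deriv (deriv f) ‖y‖ * ‖y‖^2 - 3*deriv f ‖y‖*‖y‖ + 3*f ‖y‖)/‖y‖^5)
              * (y i * y j * y k)
          + ((deriv f ‖y‖ * ‖y‖ - f ‖y‖)/‖y‖^3) * ((if i = j then 1 else 0) * y k)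
          + ((deriv f ‖y‖ * ‖y‖ - f ‖y‖)/‖y‖^3) * ((if k = j then 1 else 0) * y i)
          + ((deriv f ‖y‖ * ‖y‖ - f ‖y‖)/‖y‖^3) * ((if i = k then 1 else 0) * y j))^2 := by
      intro i j k; rw [hD2 i j k]; ring
    simp only [hsq2]
    rw [sumsecond n y ((deriv (deriv f) ‖y‖ * ‖y‖^2 - 3*deriv f ‖y‖*‖y‖ + 3*f ‖y‖)/‖y‖^5)
      ((deriv f ‖y‖ * ‖y‖ - f ‖y‖)/‖y‖^3) ((deriv f ‖y‖ * ‖y‖ - f ‖y‖)/‖y‖^3), hR,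
      hwd.deriv, hmcast]
    field_simp
    ring
end

section
/- For each γ ∈ (2,3) and p ∈ [2,∞), define a_j = 2(p−1)(p/(p−1))^j − (p−2) and b_j = (γ−1)(p−1)(p/(p−1))^j + γ for j ∈ ℕ. Then (i) a_j and b_j satisfy the recursions a_{j+1} = (p/(p−1)) a_j + (p−2)/(p−1) with a₀ = p and b_{j+1} = (p/(p−1)) b_j − γ/(p−1) with b₀ = pγ − p + 1; (ii) 2b_j ≥ a_j + 1 for all j ∈ ℕ; and (iii) there exists j ∈ ℕ with a_{j+1} − b_{j+1} + 1 ∈ [0,2]. -/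
theorem stmt_9 (γ p : ℝ) (hγ : γ ∈ Set.Ioo (2:ℝ) 3) (hp : 2 ≤ p)
    (a b : ℕ → ℝ)
    (ha : ∀ j, a j = 2*(p-1)*(p/(p-1))^j - (p-2))
    (hb : ∀ j, b j = (γ-1)*(p-1)*(p/(p-1))^j + γ) :
    (a 0 = p ∧ b 0 = p*γ - p + 1 ∧
      (∀ j, a (j+1) = (p/(p-1)) * a j + (p-2)/(p-1)) ∧
      (∀ j, b (j+1) = (p/(p-1)) * b j - γ/(p-1))) ∧
    (∀ j, a j + 1 ≤ 2 * b j) ∧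
    (∃ j : ℕ, a (j+1) - b (j+1) + 1 ∈ Set.Icc (0:ℝ) 2) := by
  obtain ⟨hγ2, hγ3⟩ := hγ
  have hp0 : (0:ℝ) < p - 1 := by linarith
  have hpne : p - (1:ℝ) ≠ 0 := ne_of_gt hp0
  have hr1 : 1 < p/(p-1) := by rw [lt_div_iff₀ hp0]; linarith
  have hr0 : 0 < p/(p-1) := by linarith
  refine ⟨⟨?_, ?_, ?_, ?_⟩, ?_, ?_⟩
  · rw [ha]; simp; ring
  · rw [hb]; simp; ring
  · intro j
    rw [ha, ha, pow_succ]
    field_simp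
    ring
  · intro j
    rw [hb, hb, pow_succ]
    field_simp
    ring
  · intro j
    rw [ha, hb]
    have h1 : (1:ℝ) ≤ (p/(p-1))^j := one_le_pow₀ (le_of_lt hr1)
    nlinarith [mul_nonneg (mul_nonneg (by linarith : (0:ℝ) ≤ γ-2) hp0.le) (by linarith : (0:ℝ) ≤ (p/(p-1))^j)]
  · set r := p/(p-1) with hrdef
    set K := p - 3 + γ with hK
    have hc : ∀ j : ℕ, a (j+1) - b (j+1) + 1 = (3-γ)*(p-1)*r^(j+1) - K := by
      intro j; rw [ha, hb]; ring
    have hex : ∃ j : ℕ, K ≤ (3-γ)*(p-1)*r^(j+1) := by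
      obtain ⟨n, hn⟩ := pow_unbounded_of_one_lt (K / ((3-γ)*(p-1))) hr1
      refine ⟨n, ?_⟩
      have h3γ : 0 < (3-γ)*(p-1) := by nlinarith
      have := (div_lt_iff₀ h3γ).mp hn
      have hrn : r^n ≤ r^(n+1) := by
        apply pow_le_pow_right₀ (le_of_lt hr1); omega
      nlinarith
    classical
    refine ⟨Nat.find hex, ?_⟩
    have hj0 : K ≤ (3-γ)*(p-1)*r^(Nat.find hex + 1) := Nat.find_spec hex
    have hub : (3-γ)*(p-1)*r^(Nat.find hex + 1) ≤ p - 1 + γ := by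
      rcases Nat.eq_zero_or_pos (Nat.find hex) with h0 | hpos
      · rw [h0]
        have : (p-1) * r = p := by rw [hrdef]; field_simp
        have hr1' : r^(0+1) = r := by ring
        rw [hr1']
        nlinarith
      · obtain ⟨k, hk⟩ := Nat.exists_eq_add_of_lt hpos
        have hk' : Nat.find hex = k + 1 := by omega
        have hlt : ¬ K ≤ (3-γ)*(p-1)*r^(k+1) := Nat.find_min hex (by omega)
        push_neg at hlt
        have hstep : (3-γ)*(p-1)*r^(Nat.find hex + 1) = r * ((3-γ)*(p-1)*r^(k+1)) := by
          rw [hk', pow_succ]; ring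
        rw [hstep]
        have hKpos : 0 < K := by rw [hK]; linarith
        have h1 : r * ((3-γ)*(p-1)*r^(k+1)) < r * K :=
          mul_lt_mul_of_pos_left hlt (by linarith)
        have h2 : r * K ≤ p - 1 + γ := by
          rw [hrdef, hK, div_mul_eq_mul_div, div_le_iff₀ hp0]
          nlinarith
        linarith
    rw [hc]
    constructor <;> simp <;> linarith
end

section
/- Let I = (0,1), m ∈ {1,2}, and ρ₀(r) ≍ (1−r)^{1/β} with β > 0. For p ∈ (0,∞), ι ∈ (−1/p, ∞), and a ∈ (0,1), suppose that ∫₀¹ r^m ρ₀ |U|^q dr ≤ M_q for every q ∈ [1, ∞) (with constants M_q). Then ∫_a¹ ρ₀^{ιβ p} |U|^p dr is finite, with a bound depending only on (p, ι, a, β, {M_q}). In particular, choosing ε with max{0, (ιp+1)β − 1, (ιp+1)β − p/2, (ιp+1)β²/(β+1)} < ε < (ιp+1)β, one has ∫_a¹ ρ₀^{ιβp} |U|^p dr ≤ (∫_a¹ ρ₀^{(−β+ε)/(1+ε−(ιp+1)β)} dr)^{1+ε−(ιp+1)β} (∫_a¹ ρ₀ |U|^{p/((ιp+1)β−ε)}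 dr)^{(ιp+1)β−ε} via Hölder's inequality. -/
open Set MeasureTheory
open scoped ENNReal

/-- If `|f|^P` is integrable and `P > 0`, then `f ∈ ℒ^P`. -/
lemma aux_memLp_of_integrable_abs_rpow {α : Type*} [MeasurableSpace α] {μ : Measure α}
    {f : α → ℝ} (hf : AEStronglyMeasurable f μ) {P : ℝ} (hP : 0 < P)
    (h : Integrable (fun x => |f x| ^ P) μ) : MemLp f (ENNReal.ofReal P) μ := by
  have hne : ENNReal.ofReal P ≠ 0 := by simp [hP, le_of_lt]
  refine (memLp_norm_rpow_iff (q := ENNReal.ofReal P) (p := ENNReal.ofReal P) hf hne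
    (by simp)).mp ?_
  rw [ENNReal.div_self hne (by simp), memLp_one_iff_integrable]
  simpa [Real.norm_eq_abs, ENNReal.toReal_ofReal hP.le] using h

theorem stmt_18 (m : ℕ) (hm : m = 1 ∨ m = 2)
    (β K₁ K₂ : ℝ) (hβ : 0 < β) (hK₁ : 0 < K₁) (hK : K₁ < K₂)
    (ρ₀ U : ℝ → ℝ) (hρm : Measurable ρ₀) (hUm : Measurable U)
    (hρbd : ∀ r ∈ Ico (0:ℝ) 1,
      K₁ * (1-r) ^ (1/β) ≤ ρ₀ r ∧ ρ₀ r ≤ K₂ * (1-r) ^ (1/β))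
    (Mq : ℝ → ℝ)
    (hmom : ∀ q : ℝ, 1 ≤ q →
      IntegrableOn (fun r => r ^ m * ρ₀ r * |U r| ^ q) (Ioo 0 1) ∧
      (∫ r in Ioo (0:ℝ) 1, r ^ m * ρ₀ r * |U r| ^ q) ≤ Mq q)
    (p ι a : ℝ) (hp : 0 < p) (hι : -(1/p) < ι) (ha : a ∈ Ioo (0:ℝ) 1) :
    IntegrableOn (fun r => ρ₀ r ^ (ι*β*p) * |U r| ^ p) (Ioo a 1) ∧
    (∀ ε : ℝ, 0 < ε → (ι*p+1)*β - 1 < ε → (ι*p+1)*β - p/2 < ε →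
      (ι*p+1)*β^2/(β+1) < ε → ε < (ι*p+1)*β →
      (∫ r in Ioo a 1, ρ₀ r ^ (ι*β*p) * |U r| ^ p) ≤
        (∫ r in Ioo a 1, ρ₀ r ^ ((-β+ε)/(1+ε-(ι*p+1)*β))) ^ (1+ε-(ι*p+1)*β) *
        (∫ r in Ioo a 1, ρ₀ r * |U r| ^ (p/((ι*p+1)*β-ε))) ^ ((ι*p+1)*β-ε)) := by
  obtain ⟨ha0, ha1⟩ := ha
  have hιp : -1 < ι * p := by
    have := mul_lt_mul_of_pos_right hι hp
    rwa [neg_mul, one_div, inv_mul_cancel₀ hp.ne'] at this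
  have hs₀ : 0 < (ι*p+1)*β := mul_pos (by linarith) hβ
  -- positivity of ρ₀ on (a,1)
  have hρpos : ∀ r ∈ Ioo a 1, 0 < ρ₀ r := by
    intro r hr
    have h1r : (0:ℝ) < 1 - r := by linarith [hr.2]
    have h2 : 0 < K₁ * (1-r) ^ (1/β) := mul_pos hK₁ (Real.rpow_pos_of_pos h1r _)
    have h3 := (hρbd r ⟨by linarith [hr.1], hr.2⟩).1
    linarith
  -- integrability of (1-r)^c on (a,1) for c > -1
  have hIc : ∀ c : ℝ, -1 < c → IntegrableOn (fun r => (1-r) ^ c) (Ioo a 1) := by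
    intro c hc
    have h1 : IntervalIntegrable (fun x : ℝ => x ^ c) volume 0 (1-a) :=
      intervalIntegral.intervalIntegrable_rpow' hc
    have h2 := h1.comp_sub_left 1
    simp only [sub_zero, sub_sub_cancel] at h2
    exact (intervalIntegrable_iff_integrableOn_Ioo_of_le ha1.le).mp h2.symm
  -- integrability of ρ₀^e on (a,1) for e > -β
  have hA : ∀ e : ℝ, -β < e → IntegrableOn (fun r => ρ₀ r ^ e) (Ioo a 1) := by
    intro e he
    have hcb : -1 < e / β := by
      rw [neg_lt, ← neg_div, div_lt_iff₀ hβ]; linarith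
    have hint : IntegrableOn (fun r => (max (K₁ ^ e) (K₂ ^ e)) * (1-r) ^ (e/β)) (Ioo a 1) :=
      (hIc _ hcb).const_mul _
    refine Integrable.mono' hint ((hρm.pow_const e).aestronglyMeasurable) ?_
    filter_upwards [ae_restrict_mem measurableSet_Ioo] with r hr
    have h1r : (0:ℝ) < 1 - r := by linarith [hr.2]
    obtain ⟨hl, hu⟩ := hρbd r ⟨by linarith [hr.1], hr.2⟩
    have ht : (0:ℝ) < (1-r) ^ (1/β) := Real.rpow_pos_of_pos h1r _
    have hρr : 0 < ρ₀ r := hρpos r hr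
    have hpow : ((1-r) ^ (1/β)) ^ e = (1-r) ^ (e/β) := by
      rw [← Real.rpow_mul h1r.le]
      congr 1
      field_simp
    rw [Real.norm_eq_abs, abs_of_nonneg (Real.rpow_nonneg hρr.le _)]
    rcases le_or_gt 0 e with he0 | he0
    · calc ρ₀ r ^ e ≤ (K₂ * (1-r) ^ (1/β)) ^ e := Real.rpow_le_rpow hρr.le hu he0
        _ = K₂ ^ e * (1-r) ^ (e/β) := by
            rw [Real.mul_rpow (by linarith) ht.le, hpow]
        _ ≤ max (K₁ ^ e) (K₂ ^ e) * (1-r) ^ (e/β) :=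
            mul_le_mul_of_nonneg_right (le_max_right _ _) (Real.rpow_nonneg h1r.le _)
    · calc ρ₀ r ^ e ≤ (K₁ * (1-r) ^ (1/β)) ^ e :=
          Real.rpow_le_rpow_of_nonpos (mul_pos hK₁ ht) hl he0.le
        _ = K₁ ^ e * (1-r) ^ (e/β) := by
            rw [Real.mul_rpow hK₁.le ht.le, hpow]
        _ ≤ max (K₁ ^ e) (K₂ ^ e) * (1-r) ^ (e/β) :=
            mul_le_mul_of_nonneg_right (le_max_left _ _) (Real.rpow_nonneg h1r.le _)
  -- integrability of ρ₀ |U|^q on (a,1) for q ≥ 1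
  have hB : ∀ q : ℝ, 1 ≤ q → IntegrableOn (fun r => ρ₀ r * |U r| ^ q) (Ioo a 1) := by
    intro q hq
    have hint : IntegrableOn (fun r => ((a:ℝ) ^ m)⁻¹ * (r ^ m * ρ₀ r * |U r| ^ q)) (Ioo a 1) :=
      (((hmom q hq).1).mono_set (Ioo_subset_Ioo ha0.le le_rfl)).const_mul _
    refine Integrable.mono' hint
      ((hρm.mul ((hUm.abs).pow_const q)).aestronglyMeasurable) ?_
    filter_upwards [ae_restrict_mem measurableSet_Ioo] with r hr
    have hρr : 0 < ρ₀ r := hρpos r hr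
    have hrm : a ^ m ≤ r ^ m := pow_le_pow_left₀ ha0.le hr.1.le m
    have habs : 0 ≤ |U r| ^ q := Real.rpow_nonneg (abs_nonneg _) _
    have ham : (0:ℝ) < a ^ m := pow_pos ha0 m
    rw [Real.norm_eq_abs, abs_of_nonneg (mul_nonneg hρr.le habs),
      inv_mul_eq_div, le_div_iff₀ ham]
    have h1 : ρ₀ r * |U r| ^ q * a ^ m ≤ ρ₀ r * |U r| ^ q * r ^ m :=
      mul_le_mul_of_nonneg_left hrm (mul_nonneg hρr.le habs)
    calc ρ₀ r * |U r| ^ q * a ^ m ≤ ρ₀ r * |U r| ^ q * r ^ m := h1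
      _ = r ^ m * ρ₀ r * |U r| ^ q := by ring
  -- the main Hölder step
  have key : ∀ ε : ℝ, 0 < ε → (ι*p+1)*β - 1 < ε → (ι*p+1)*β - p/2 < ε →
      (ι*p+1)*β^2/(β+1) < ε → ε < (ι*p+1)*β →
      IntegrableOn (fun r => ρ₀ r ^ (ι*β*p) * |U r| ^ p) (Ioo a 1) ∧
      (∫ r in Ioo a 1, ρ₀ r ^ (ι*β*p) * |U r| ^ p) ≤
        (∫ r in Ioo a 1, ρ₀ r ^ ((-β+ε)/(1+ε-(ι*p+1)*β))) ^ (1+ε-(ι*p+1)*β) *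
        (∫ r in Ioo a 1, ρ₀ r * |U r| ^ (p/((ι*p+1)*β-ε))) ^ ((ι*p+1)*β-ε) := by
    intro ε hε0 hε1 hε2 hε3 hε4
    set s : ℝ := (ι*p+1)*β - ε with hs_def
    have hs0 : 0 < s := by simp only [hs_def]; linarith
    have hs1 : s < 1 := by simp only [hs_def]; linarith
    have h1s : 0 < 1 - s := by linarith
    have hps : 1 < p / s := by
      rw [lt_div_iff₀ hs0]; simp only [hs_def]; linarith
    set P : ℝ := 1/(1-s) with hP_def
    set Q : ℝ := 1/s with hQ_def
    have hPpos : 0 < P := by positivity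
    have hQpos : 0 < Q := by positivity
    have hPQ : Real.HolderConjugate P Q := by
      rw [Real.holderConjugate_iff]; constructor
      · exact one_lt_one_div h1s (by linarith)
      · simp only [hP_def, hQ_def, one_div, inv_inv]; ring
    set f : ℝ → ℝ := fun r => ρ₀ r ^ (-β+ε) with hf_def
    set g : ℝ → ℝ := fun r => ρ₀ r ^ s * |U r| ^ p with hg_def
    have hfg : ∀ r ∈ Ioo a 1, f r * g r = ρ₀ r ^ (ι*β*p) * |U r| ^ p := by
      intro r hr
      have hρr := hρpos r hr
      simp only [hf_def, hg_def]
      rw [← mul_assoc, ← Real.rpow_add hρr]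
      congr 2
      simp only [hs_def]; ring
    have hfP : ∀ r ∈ Ioo a 1, |f r| ^ P = ρ₀ r ^ ((-β+ε)/(1-s)) := by
      intro r hr
      have hρr := hρpos r hr
      simp only [hf_def]
      rw [abs_of_nonneg (Real.rpow_nonneg hρr.le _), ← Real.rpow_mul hρr.le,
        hP_def, mul_one_div]
    have hgQ : ∀ r ∈ Ioo a 1, |g r| ^ Q = ρ₀ r * |U r| ^ (p/s) := by
      intro r hr
      have hρr := hρpos r hr
      have h1 : 0 ≤ ρ₀ r ^ s := Real.rpow_nonneg hρr.le _
      have h2 : 0 ≤ |U r| ^ p := Real.rpow_nonneg (abs_nonneg _) _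
      simp only [hg_def]
      rw [abs_of_nonneg (mul_nonneg h1 h2), Real.mul_rpow h1 h2,
        ← Real.rpow_mul hρr.le, ← Real.rpow_mul (abs_nonneg _), hQ_def,
        mul_one_div, mul_one_div, div_self hs0.ne', Real.rpow_one]
    have he₁ : -β < (-β+ε)/(1-s) := by
      rw [lt_div_iff₀ h1s]
      have h3 := (div_lt_iff₀ (by linarith : (0:ℝ) < β+1)).mp hε3
      simp only [hs_def]
      nlinarith
    have hfmeas : AEStronglyMeasurable f (volume.restrict (Ioo a 1)) :=
      ((hρm.pow_const _).aestronglyMeasurable)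
    have hgmeas : AEStronglyMeasurable g (volume.restrict (Ioo a 1)) :=
      (((hρm.pow_const _).mul ((hUm.abs).pow_const _)).aestronglyMeasurable)
    have hfint : Integrable (fun r => |f r| ^ P) (volume.restrict (Ioo a 1)) := by
      refine (hA _ he₁).congr ?_
      filter_upwards [ae_restrict_mem measurableSet_Ioo] with r hr
      exact (hfP r hr).symm
    have hgint : Integrable (fun r => |g r| ^ Q) (volume.restrict (Ioo a 1)) := by
      refine (hB (p/s) hps.le).congr ?_
      filter_upwards [ae_restrict_mem measurableSet_Ioo] with r hr
      exact (hgQ r hr).symm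
    have hfLp : MemLp f (ENNReal.ofReal P) (volume.restrict (Ioo a 1)) :=
      aux_memLp_of_integrable_abs_rpow hfmeas hPpos hfint
    have hgLp : MemLp g (ENNReal.ofReal Q) (volume.restrict (Ioo a 1)) :=
      aux_memLp_of_integrable_abs_rpow hgmeas hQpos hgint
    have hPinv : (ENNReal.ofReal P)⁻¹ = ENNReal.ofReal (1-s) := by
      rw [← ENNReal.ofReal_inv_of_pos hPpos]
      congr 1
      simp [hP_def]
    have hQinv : (ENNReal.ofReal Q)⁻¹ = ENNReal.ofReal s := by
      rw [← ENNReal.ofReal_inv_of_pos hQpos]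
      congr 1
      simp [hQ_def]
    have hconj : (1 : ℝ≥0∞)/1 = 1/(ENNReal.ofReal P) + 1/(ENNReal.ofReal Q) := by
      simp only [one_div, hPinv, hQinv]
      rw [← ENNReal.ofReal_add (by linarith) hs0.le]
      simp
    have hprod : Integrable (fun r => f r * g r) (volume.restrict (Ioo a 1)) := by
      rw [← memLp_one_iff_integrable]
      haveI : ENNReal.HolderTriple (ENNReal.ofReal P) (ENNReal.ofReal Q) 1 := ⟨by simpa [one_div] using hconj.symm⟩
      have := MemLp.smul (φ := f) (r := 1) hgLp hfLp
      exact this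
    have hprodEq : (fun r => ρ₀ r ^ (ι*β*p) * |U r| ^ p)
        =ᵐ[volume.restrict (Ioo a 1)] fun r => f r * g r := by
      filter_upwards [ae_restrict_mem measurableSet_Ioo] with r hr
      exact (hfg r hr).symm
    constructor
    · exact hprod.congr hprodEq.symm
    · have hf_nonneg : 0 ≤ᵐ[volume.restrict (Ioo a 1)] f := by
        filter_upwards [ae_restrict_mem measurableSet_Ioo] with r hr
        exact Real.rpow_nonneg (hρpos r hr).le _
      have hg_nonneg : 0 ≤ᵐ[volume.restrict (Ioo a 1)] g := by
        filter_upwards [ae_restrict_mem measurableSet_Ioo] with r hr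
        exact mul_nonneg (Real.rpow_nonneg (hρpos r hr).le _)
          (Real.rpow_nonneg (abs_nonneg _) _)
      have hHolder := integral_mul_le_Lp_mul_Lq_of_nonneg hPQ hf_nonneg hg_nonneg hfLp hgLp
      have heq1 : (∫ r in Ioo a 1, f r ^ P) = ∫ r in Ioo a 1, ρ₀ r ^ ((-β+ε)/(1-s)) := by
        refine integral_congr_ae ?_
        filter_upwards [ae_restrict_mem measurableSet_Ioo, hf_nonneg] with r hr hfr
        rw [← abs_of_nonneg hfr]
        exact hfP r hr
      have heq2 : (∫ r in Ioo a 1, g r ^ Q) = ∫ r in Ioo a 1, ρ₀ r * |U r| ^ (p/s) := by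
        refine integral_congr_ae ?_
        filter_upwards [ae_restrict_mem measurableSet_Ioo, hg_nonneg] with r hr hgr
        rw [← abs_of_nonneg hgr]
        exact hgQ r hr
      have h1sEq : 1+ε-(ι*p+1)*β = 1-s := by simp only [hs_def]; ring
      rw [h1sEq]
      calc (∫ r in Ioo a 1, ρ₀ r ^ (ι*β*p) * |U r| ^ p)
          = ∫ r in Ioo a 1, f r * g r := integral_congr_ae hprodEq
        _ ≤ (∫ r in Ioo a 1, f r ^ P) ^ (1/P) * (∫ r in Ioo a 1, g r ^ Q) ^ (1/Q) := hHolder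
        _ = (∫ r in Ioo a 1, ρ₀ r ^ ((-β+ε)/(1-s))) ^ (1-s) *
            (∫ r in Ioo a 1, ρ₀ r * |U r| ^ (p/s)) ^ s := by
            rw [heq1, heq2, hP_def, hQ_def, one_div_one_div, one_div_one_div]
  -- choose an admissible ε for the integrability claim
  have hMlt : max (max 0 ((ι*p+1)*β - 1)) (max ((ι*p+1)*β - p/2) ((ι*p+1)*β^2/(β+1)))
      < (ι*p+1)*β := by
    simp only [max_lt_iff]
    refine ⟨⟨hs₀, by linarith⟩, by linarith, ?_⟩
    rw [div_lt_iff₀ (by linarith : (0:ℝ) < β+1)]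
    nlinarith
  set M := max (max 0 ((ι*p+1)*β - 1)) (max ((ι*p+1)*β - p/2) ((ι*p+1)*β^2/(β+1))) with hM_def
  set ε₀ := (M + (ι*p+1)*β)/2 with hε₀_def
  have hMε : M < ε₀ := by simp only [hε₀_def]; linarith
  have hε₀lt : ε₀ < (ι*p+1)*β := by simp only [hε₀_def]; linarith
  have h0M : (0:ℝ) ≤ M := le_trans (le_max_left _ _) (le_max_left _ _)
  have h1M : (ι*p+1)*β - 1 ≤ M := le_trans (le_max_right _ _) (le_max_left _ _)
  have h2M : (ι*p+1)*β - p/2 ≤ M := le_trans (le_max_left _ _) (le_max_right _ _)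
  have h3M : (ι*p+1)*β^2/(β+1) ≤ M := le_trans (le_max_right _ _) (le_max_right _ _)
  exact ⟨(key ε₀ (by linarith) (by linarith) (by linarith) (by linarith) hε₀lt).1,
    fun ε hε0 hε1 hε2 hε3 hε4 => (key ε hε0 hε1 hε2 hε3 hε4).2⟩
end
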